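/- Let ρ₀ > 0, let n ≥ 2 and m be integers with 0 < m < n and gcd(m,n) = 1, and let ρ₁ : ℝ → ℝ be continuous and 2π-periodic. For θ ∈ ℝ set θ_j = θ + 2πmj/n and define M(θ) as the derivative at ε = 0 of ε ↦ ∑_{j=0}^{n-1} arcosh( cosh(ρ₀+ερ₁(θ_j))·cosh(ρ₀+ερ₁(θ_{j+1})) − sinh(ρ₀+ερ₁(θ_j))·sinh(ρ₀+ερ₁(θ_{j+1}))·cos(2πm/n) ). If there exists k ∈ ℤ with k ≠ 0, n ∣ k, and the k-th Fourier coefficient of ρ₁ nonzero, then M is not constant on ℝ. -/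

import Mathlib

open Real

noncomputable def arcosh (x : ℝ) : ℝ := Real.log (x + Real.sqrt (x ^ 2 - 1))

noncomputable def fourierCoeff2pi (g : ℝ → ℂ) (k : ℤ) : ℂ :=
  (1 / (2 * (Real.pi : ℂ))) *
    ∫ θ in (0 : ℝ)..(2 * Real.pi), g θ * Complex.exp (-Complex.I * (k : ℂ) * (θ : ℂ))

/-!
Differentiating the hyperbolic law of cosines at the circle of radius `ρ₀` shows that every side
of the polygon contributes `K · (ρ₁(θ_j) + ρ₁(θ_{j+1}))` to `M(θ)`, with a constant `K ≠ 0` (here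
`cos (2πm/n) < 1` is needed). Hence `M(θ) = 2K · ∑_j ρ₁(θ_j)`. When `n ∣ k`, every translate
`ρ₁(· + 2πmj/n)` has the same `k`-th Fourier coefficient as `ρ₁`, so the `k`-th coefficient of `M`
is `2Kn` times that of `ρ₁`, which is nonzero; a constant has vanishing coefficients at `k ≠ 0`.
-/

open Complex in
lemma fourierCoeff2pi_const (a : ℂ) {k : ℤ} (hk : k ≠ 0) : fourierCoeff2pi (fun _ => a) k = 0 := by
  have hkI : -I * k ≠ 0 := mul_ne_zero (neg_ne_zero.2 I_ne_zero) (Int.cast_ne_zero.2 hk)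
  have hexp : cexp (-I * k * ↑(2 * π)) = 1 := by
    rw [← exp_int_mul_two_pi_mul_I (-k)]
    push_cast
    ring_nf
  rw [fourierCoeff2pi, intervalIntegral.integral_const_mul, integral_exp_mul_complex hkI, hexp]
  simp

lemma fourierCoeff2pi_sum {ι : Type*} (s : Finset ι) (g : ι → ℝ → ℂ)
    (hg : ∀ i ∈ s, Continuous (g i)) (k : ℤ) :
    fourierCoeff2pi (fun θ => ∑ i ∈ s, g i θ) k = ∑ i ∈ s, fourierCoeff2pi (g i) k := by
  simp only [fourierCoeff2pi, Finset.sum_mul, ← Finset.mul_sum]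
  congr 1
  exact intervalIntegral.integral_finsetSum fun i hi =>
    ((hg i hi).mul (by fun_prop)).intervalIntegrable _ _

open Complex in
lemma exp_neg_I_mul_add_of_mul_eq {k l : ℤ} {s : ℝ} (hl : k * s = l * (2 * π)) (θ : ℝ) :
    cexp (-I * k * ↑(θ + s)) = cexp (-I * k * θ) := by
  have hl' : (k : ℂ) * s = l * (2 * π) := by exact_mod_cast hl
  have hs : -I * k * s = (-l : ℤ) * (2 * π * I) := by
    push_cast
    linear_combination (-I) * hl'
  rw [ofReal_add, mul_add, Complex.exp_add, hs, exp_int_mul_two_pi_mul_I, mul_one]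

lemma fourierCoeff2pi_comp_add {g : ℝ → ℂ} (hg : Function.Periodic g (2 * π)) {k l : ℤ} {s : ℝ}
    (hl : k * s = l * (2 * π)) :
    fourierCoeff2pi (fun θ => g (θ + s)) k = fourierCoeff2pi g k := by
  set F : ℝ → ℂ := fun u => g u * Complex.exp (-Complex.I * k * u)
  have hF : Function.Periodic F (2 * π) := fun u => by
    simp only [F, hg u, exp_neg_I_mul_add_of_mul_eq (s := 2 * π) (l := k) rfl u]
  unfold fourierCoeff2pi
  congr 1
  calc (∫ θ in (0 : ℝ)..2 * π, g (θ + s) * Complex.exp (-Complex.I * k * θ))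
      = ∫ θ in (0 : ℝ)..2 * π, F (θ + s) := by
        simp only [F, exp_neg_I_mul_add_of_mul_eq hl]
    _ = ∫ θ in s..s + 2 * π, F θ := by
        rw [intervalIntegral.integral_comp_add_right, zero_add, add_comm]
    _ = ∫ θ in (0 : ℝ)..2 * π, F θ := by
        rw [hF.intervalIntegral_add_eq s 0, zero_add]

lemma cos_two_pi_mul_div_lt_one {n : ℕ} {m : ℤ} (hn : n ≠ 0) (hnm : ¬ (n : ℤ) ∣ m) :
    cos (2 * π * m / n) < 1 := by
  refine (cos_le_one _).lt_of_ne fun hcos => hnm ?_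
  obtain ⟨l, hl⟩ := (cos_eq_one_iff _).1 hcos
  have hln : (m : ℝ) = n * l := by
    field_simp at hl
    linarith
  exact ⟨l, by exact_mod_cast hln⟩

lemma one_lt_cosh_mul_cosh_sub_sinh_mul_sinh_mul {ρ c : ℝ} (hρ : ρ ≠ 0) (hc : c < 1) :
    1 < cosh ρ * cosh ρ - sinh ρ * sinh ρ * c := by
  have hs : 0 < sinh ρ * sinh ρ := mul_self_pos.2 (sinh_ne_zero.2 hρ)
  nlinarith [cosh_sq ρ, mul_pos hs (sub_pos.2 hc)]

/-- The derivative of the length of a chord of the circle of radius `ρ`, subtending an angle of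
cosine `c`, with respect to a radial displacement of one of its endpoints. -/
noncomputable def chordLengthRate (ρ c : ℝ) : ℝ :=
  sinh ρ * cosh ρ * (1 - c) / √((cosh ρ * cosh ρ - sinh ρ * sinh ρ * c) ^ 2 - 1)

lemma chordLengthRate_ne_zero {ρ c : ℝ} (hρ : ρ ≠ 0) (hc : c < 1) : chordLengthRate ρ c ≠ 0 := by
  have h1 := one_lt_cosh_mul_cosh_sub_sinh_mul_sinh_mul hρ hc
  refine div_ne_zero ?_ (sqrt_pos.2 (by nlinarith)).ne'
  exact mul_ne_zero (mul_ne_zero (sinh_ne_zero.2 hρ) (cosh_pos ρ).ne') (sub_pos.2 hc).ne'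

lemma hasDerivAt_arcosh_chord {ρ c : ℝ} (hρ : ρ ≠ 0) (hc : c < 1) (p q : ℝ) :
    HasDerivAt (fun ε : ℝ => _root_.arcosh (cosh (ρ + ε * p) * cosh (ρ + ε * q) -
      sinh (ρ + ε * p) * sinh (ρ + ε * q) * c)) (chordLengthRate ρ c * (p + q)) 0 := by
  have hp : HasDerivAt (fun ε : ℝ => ρ + ε * p) p 0 := by
    simpa using ((hasDerivAt_id (0 : ℝ)).mul_const p).const_add ρ
  have hq : HasDerivAt (fun ε : ℝ => ρ + ε * q) q 0 := by
    simpa using ((hasDerivAt_id (0 : ℝ)).mul_const q).const_add ρ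
  have hinner := (hp.cosh.mul hq.cosh).sub ((hp.sinh.mul hq.sinh).mul_const c)
  have hx : 1 < cosh (ρ + 0 * p) * cosh (ρ + 0 * q) - sinh (ρ + 0 * p) * sinh (ρ + 0 * q) * c := by
    simpa using one_lt_cosh_mul_cosh_sub_sinh_mul_sinh_mul hρ hc
  -- `_root_.arcosh` and `Real.arcosh` are the same formula
  refine ((Real.hasDerivAt_arcosh hx).comp 0 hinner).congr_deriv ?_
  simp only [zero_mul, add_zero, chordLengthRate]
  ring

noncomputable def vertexSum (ρ₁ : ℝ → ℝ) (n : ℕ) (m : ℤ) (θ : ℝ) : ℝ :=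
  ∑ j ∈ Finset.range n, ρ₁ (θ + 2 * π * m * j / n)

lemma sum_range_succ_eq_vertexSum {ρ₁ : ℝ → ℝ} (hper : Function.Periodic ρ₁ (2 * π))
    (n : ℕ) (m : ℤ) (θ : ℝ) :
    ∑ j ∈ Finset.range n, ρ₁ (θ + 2 * π * m * (j + 1) / n) = vertexSum ρ₁ n m θ := by
  obtain rfl | hn := eq_or_ne n 0
  · simp [vertexSum]
  have hlast : ρ₁ (θ + 2 * π * m * n / n) = ρ₁ (θ + 2 * π * m * (0 : ℕ) / n) := by
    rw [mul_div_cancel_right₀ _ (Nat.cast_ne_zero.2 hn), Nat.cast_zero, mul_zero, zero_div,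
      add_zero, mul_comm, hper.int_mul m θ]
  have h1 := Finset.sum_range_succ' (fun j : ℕ => ρ₁ (θ + 2 * π * m * j / n)) n
  have h2 := Finset.sum_range_succ (fun j : ℕ => ρ₁ (θ + 2 * π * m * j / n)) n
  push_cast at h1
  rw [vertexSum]
  linarith

lemma deriv_polygon_length_eq {ρ₀ c : ℝ} (hρ : ρ₀ ≠ 0) (hc : c < 1) {ρ₁ : ℝ → ℝ}
    (hper : Function.Periodic ρ₁ (2 * π)) (n : ℕ) (m : ℤ) (θ : ℝ) :
    deriv (fun ε : ℝ => ∑ j ∈ Finset.range n,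
        _root_.arcosh (cosh (ρ₀ + ε * ρ₁ (θ + 2 * π * m * j / n)) *
            cosh (ρ₀ + ε * ρ₁ (θ + 2 * π * m * (j + 1) / n)) -
          sinh (ρ₀ + ε * ρ₁ (θ + 2 * π * m * j / n)) *
            sinh (ρ₀ + ε * ρ₁ (θ + 2 * π * m * (j + 1) / n)) * c)) 0 =
      2 * chordLengthRate ρ₀ c * vertexSum ρ₁ n m θ := by
  rw [(HasDerivAt.fun_sum fun j _ => hasDerivAt_arcosh_chord hρ hc _ _).deriv,
    ← Finset.mul_sum, Finset.sum_add_distrib, sum_range_succ_eq_vertexSum hper, vertexSum]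
  ring

lemma fourierCoeff2pi_vertexSum {ρ₁ : ℝ → ℝ} (hc : Continuous ρ₁)
    (hper : Function.Periodic ρ₁ (2 * π)) {n : ℕ} (hn : n ≠ 0) (m t : ℤ) :
    fourierCoeff2pi (fun θ => ((vertexSum ρ₁ n m θ : ℝ) : ℂ)) (n * t) =
      n * fourierCoeff2pi (fun θ => ((ρ₁ θ : ℝ) : ℂ)) (n * t) := by
  have hperC : Function.Periodic (fun θ => ((ρ₁ θ : ℝ) : ℂ)) (2 * π) := fun θ => by
    simp only [hper θ]
  simp only [vertexSum, Complex.ofReal_sum]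
  rw [fourierCoeff2pi_sum _ _ fun j _ => by fun_prop]
  rw [Finset.sum_congr rfl fun (j : ℕ) _ => fourierCoeff2pi_comp_add hperC (l := t * m * j) ?_]
  · simp
  · push_cast
    field_simp

theorem hyperbolic_melnikov_not_constant_general (ρ₀ : ℝ) (hρ : 0 < ρ₀)
    (n : ℕ) (m : ℤ) (hm : 0 < m) (hmn : m < (n : ℤ))
    (ρ₁ : ℝ → ℝ) (hc : Continuous ρ₁) (hper : Function.Periodic ρ₁ (2 * π))
    (M : ℝ → ℝ)
    (hM : ∀ θ : ℝ, M θ =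
      deriv (fun ε : ℝ => ∑ j ∈ Finset.range n,
        _root_.arcosh (cosh (ρ₀ + ε * ρ₁ (θ + 2 * π * m * j / n)) *
            cosh (ρ₀ + ε * ρ₁ (θ + 2 * π * m * (j + 1) / n)) -
          sinh (ρ₀ + ε * ρ₁ (θ + 2 * π * m * j / n)) *
            sinh (ρ₀ + ε * ρ₁ (θ + 2 * π * m * (j + 1) / n)) * cos (2 * π * m / n))) 0)
    (h : ∃ k : ℤ, k ≠ 0 ∧ (n : ℤ) ∣ k ∧
      fourierCoeff2pi (fun θ => ((ρ₁ θ : ℝ) : ℂ)) k ≠ 0) :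
    ¬ ∃ c : ℝ, ∀ θ : ℝ, M θ = c := by
  obtain ⟨k, hk0, ⟨t, rfl⟩, hk⟩ := h
  rintro ⟨C, hC⟩
  have hn : n ≠ 0 := by omega
  have hcos : cos (2 * π * m / n) < 1 :=
    cos_two_pi_mul_div_lt_one hn fun hdvd => (Int.le_of_dvd hm hdvd).not_gt hmn
  have hK := chordLengthRate_ne_zero hρ.ne' hcos
  have hconst : ∀ θ, vertexSum ρ₁ n m θ = C / (2 * chordLengthRate ρ₀ (cos (2 * π * m / n))) :=
    fun θ => by
      rw [eq_div_iff (mul_ne_zero two_ne_zero hK), ← hC θ, hM θ,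
        deriv_polygon_length_eq hρ.ne' hcos hper]
      ring
  have hcoef := fourierCoeff2pi_vertexSum hc hper hn m t
  simp only [hconst, fourierCoeff2pi_const _ hk0] at hcoef
  exact hk ((mul_eq_zero.1 hcoef.symm).resolve_left (Nat.cast_ne_zero.2 hn))

/-- **Break-up criterion on the hyperbolic plane.** For `ρ₀ > 0`, integers `0 < m < n`,
`n ≥ 2`, `gcd(m,n) = 1`, and a continuous `2π`-periodic `ρ₁ : ℝ → ℝ`, let `M(θ)` be the
derivative at `ε = 0` of the total hyperbolic length of the `(m,n)`-polygon inscribed in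
the perturbed geodesic circle `ρ₀ + ερ₁` with impact angles `θ_j = θ + 2πmj/n`. If `ρ₁`
has a nonzero Fourier coefficient at some nonzero frequency `k` divisible by `n`, then `M`
is not constant. -/
theorem hyperbolic_melnikov_not_constant (ρ₀ : ℝ) (hρ : 0 < ρ₀)
    (n : ℕ) (hn : 2 ≤ n) (m : ℤ) (hm : 0 < m) (hmn : m < (n : ℤ))
    (hgcd : Int.gcd m (n : ℤ) = 1)
    (ρ₁ : ℝ → ℝ) (hc : Continuous ρ₁) (hper : Function.Periodic ρ₁ (2 * π))
    (M : ℝ → ℝ)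
    (hM : ∀ θ : ℝ, M θ =
      deriv (fun ε : ℝ => ∑ j ∈ Finset.range n,
        _root_.arcosh (cosh (ρ₀ + ε * ρ₁ (θ + 2 * π * m * j / n)) *
            cosh (ρ₀ + ε * ρ₁ (θ + 2 * π * m * (j + 1) / n)) -
          sinh (ρ₀ + ε * ρ₁ (θ + 2 * π * m * j / n)) *
            sinh (ρ₀ + ε * ρ₁ (θ + 2 * π * m * (j + 1) / n)) * cos (2 * π * m / n))) 0)
    (h : ∃ k : ℤ, k ≠ 0 ∧ (n : ℤ) ∣ k ∧
      fourierCoeff2pi (fun θ => ((ρ₁ θ : ℝ) : ℂ)) k ≠ 0) :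
    ¬ ∃ c : ℝ, ∀ θ : ℝ, M θ = c :=
  hyperbolic_melnikov_not_constant_general ρ₀ hρ n m hm hmn ρ₁ hc hper M hM h
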